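/- Let G and H be positive definite Hermitian n×n complex matrices with trace(G⁻¹H) = n and det H = det G. Then H = G. -/

import Mathlib

/-!
With `S = √G`, the positive definite matrix `M = S⁻¹ H S⁻¹` is similar to `G⁻¹ H`, so it has trace
`n` and determinant `1`: its eigenvalues have arithmetic and geometric mean `1`. The equality case
of AM–GM, obtained by summing `log μ ≤ μ - 1`, makes every eigenvalue `1`, so `M = 1` and
`H = S S = G`.
-/

open scoped ComplexOrder MatrixOrder

theorem Real.eq_one_of_sum_eq_card_of_prod_eq_one {ι : Type*} [Fintype ι] {x : ι → ℝ}
    (hpos : ∀ i, 0 < x i) (hsum : ∑ i, x i = Fintype.card ι) (hprod : ∏ i, x i = 1) (i : ι) :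
    x i = 1 := by
  have hle : ∀ j ∈ Finset.univ, Real.log (x j) ≤ x j - 1 :=
    fun j _ => Real.log_le_sub_one_of_pos (hpos j)
  have hsum_eq : ∑ j, Real.log (x j) = ∑ j, (x j - 1) := by
    rw [← Real.log_prod fun j _ => (hpos j).ne', hprod, Real.log_one, Finset.sum_sub_distrib,
      hsum, Finset.sum_const, Finset.card_univ, nsmul_one, sub_self]
  have heq := (Finset.sum_eq_sum_iff_of_le hle).mp hsum_eq i (Finset.mem_univ i)
  by_contra hne
  exact (Real.log_lt_sub_one_of_pos (hpos i) hne).ne heq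

namespace Matrix

variable {n 𝕜 : Type*} [Fintype n] [DecidableEq n] [RCLike 𝕜]

theorem IsHermitian.eq_one_of_eigenvalues_eq_one {A : Matrix n n 𝕜} (hA : A.IsHermitian)
    (h : ∀ i, hA.eigenvalues i = 1) : A = 1 := by
  rw [hA.spectral_theorem]
  simp [Function.comp_def, h]

theorem PosDef.eq_one_of_trace_eq_card_of_det_eq_one {A : Matrix n n 𝕜} (hA : A.PosDef)
    (htr : A.trace = Fintype.card n) (hdet : A.det = 1) : A = 1 := by
  refine hA.isHermitian.eq_one_of_eigenvalues_eq_one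
    (Real.eq_one_of_sum_eq_card_of_prod_eq_one hA.eigenvalues_pos ?_ ?_)
  · exact_mod_cast hA.isHermitian.trace_eq_sum_eigenvalues.symm.trans htr
  · exact_mod_cast hA.isHermitian.det_eq_prod_eigenvalues.symm.trans hdet

theorem PosDef.eq_of_trace_inv_mul_eq_card_of_det_eq {G H : Matrix n n 𝕜} (hG : G.PosDef)
    (hH : H.PosDef) (htr : (G⁻¹ * H).trace = Fintype.card n) (hdet : H.det = G.det) :
    H = G := by
  set S := CFC.sqrt G
  have hSS : S * S = G := CFC.sqrt_mul_sqrt_self G hG.posSemidef.nonneg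
  have hS : Sᴴ = S := (nonneg_iff_posSemidef.mp (CFC.sqrt_nonneg G)).isHermitian
  have hSu : IsUnit S := (CFC.isUnit_sqrt_iff G hG.posSemidef.nonneg).mpr hG.isUnit
  have hSdet : IsUnit S.det := (isUnit_iff_isUnit_det S).mp hSu
  have hM : (S⁻¹ * H * S⁻¹).PosDef := by
    simpa [conjTranspose_nonsing_inv, hS] using
      hH.conjTranspose_mul_mul_same
        (mulVec_injective_iff_isUnit.mpr (isUnit_nonsing_inv_iff.mpr hSu))
  have hMtr : (S⁻¹ * H * S⁻¹).trace = Fintype.card n := by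
    rw [trace_mul_cycle, ← mul_inv_rev, hSS, htr]
  have hMdet : (S⁻¹ * H * S⁻¹).det = 1 := by
    rw [det_mul, det_mul, det_nonsing_inv, hdet, ← hSS, det_mul,
      Ring.inverse_eq_inv']
    field_simp [hSdet.ne_zero]
  have hM1 := hM.eq_one_of_trace_eq_card_of_det_eq_one hMtr hMdet
  calc H = S * (S⁻¹ * H * S⁻¹) * S := by
        rw [mul_assoc, mul_assoc, nonsing_inv_mul _ hSdet, mul_one, ← mul_assoc,
          mul_nonsing_inv _ hSdet, one_mul]
    _ = G := by rw [hM1, mul_one, hSS]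

end Matrix

theorem stmt_3 (n : ℕ) (G H : Matrix (Fin n) (Fin n) ℂ)
    (hG : G.PosDef) (hH : H.PosDef)
    (htr : (G⁻¹ * H).trace = (n : ℂ)) (hdet : H.det = G.det) :
    H = G :=
  hG.eq_of_trace_inv_mul_eq_card_of_det_eq hH (by simpa using htr) hdet
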